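/- Under the additional hypotheses that $\Lambda$ has a least element $\lambda$, the action of $G_\lambda$ on $X__\lambda$ is free, and the bonding homomorphism $\nu_\lambda^\alpha : G_\alpha \to G_\lambda$ is injective for each $\alpha$, the natural map $\psi : (\varprojlim X_\alpha)/(\varprojlim G_\alpha) \to \varprojlim (X_\alpha/G_\alpha)$, $\overline{(x_\alpha)} \mapsto (\overline{x_\alpha})$, is a homeomorphism. -/

import Mathlib

open MulAction

/-- The inverse limit of an inverse system of spaces, as a subspace of the
product. -/
abbrev InvLimit {Λ : Type*} [Preorder Λ] (X : Λ → Type*) [∀ α, TopologicalSpace (X α)]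
    (π : ∀ {α β : Λ}, α ≤ β → X β → X α) : Type _ :=
  {x : ∀ α, X α // ∀ ⦃α β : Λ⦄ (h : α ≤ β), π h (x β) = x α}

/-- The set of threads of an inverse system of groups, as a subgroup of the
product group. -/
def invLimitSubgroup {Λ : Type*} [Preorder Λ] (G : Λ → Type*) [∀ α, Group (G α)]
    (ν : ∀ {α β : Λ}, α ≤ β → G β →* G α) : Subgroup (∀ α, G α) where
  carrier := {g | ∀ ⦃α β : Λ⦄ (h : α ≤ β), ν h (g β) = g α}
  one_mem' := by intro α β h; simp
  mul_mem' := by intro a b ha hb α β h; simp [map_mul, ha h, hb h]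
  inv_mem' := by intro a ha α β h; simp [map_inv, ha h]

/-- The orbit equivalence relation of the coordinatewise action of
`lim G_α` on `lim X_α`. -/
def limOrbitSetoid {Λ : Type*} [Preorder Λ] (X : Λ → Type*) [∀ α, TopologicalSpace (X α)]
    (G : Λ → Type*) [∀ α, Group (G α)] [∀ α, MulAction (G α) (X α)]
    (π : ∀ {α β : Λ}, α ≤ β → X β → X α)
    (ν : ∀ {α β : Λ}, α ≤ β → G β →* G α) : Setoid (InvLimit X π) where
  r x y := ∃ g : invLimitSubgroup G ν, ∀ α, (g : ∀ α, G α) α • y.1 α = x.1 α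
  iseqv := by
    constructor
    · exact fun x => ⟨1, fun α => one_smul _ _⟩
    · rintro x y ⟨g, hg⟩
      exact ⟨g⁻¹, fun α => by
        rw [← hg α]; simp [Subgroup.coe_inv, Pi.inv_apply, inv_smul_smul]⟩
    · rintro x y z ⟨g, hg⟩ ⟨g', hg'⟩
      exact ⟨g * g', fun α => by
        simp only [Subgroup.coe_mul, Pi.mul_apply, mul_smul, hg' α, hg α]⟩

/-- The map induced on orbit spaces by an equivariant bonding map. -/
def quotBonding {Λ : Type*} [Preorder Λ] (X : Λ → Type*) [∀ α, TopologicalSpace (X α)]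
    (G : Λ → Type*) [∀ α, Group (G α)] [∀ α, MulAction (G α) (X α)]
    (π : ∀ {α β : Λ}, α ≤ β → X β → X α)
    (ν : ∀ {α β : Λ}, α ≤ β → G β →* G α)
    (hequiv : ∀ {α β : Λ} (h : α ≤ β) (g : G β) (x : X β),
      π h (g • x) = ν h g • π h x)
    {α β : Λ} (h : α ≤ β) :
    Quotient (orbitRel (G β) (X β)) → Quotient (orbitRel (G α) (X α)) :=
  Quotient.lift (fun x => Quotient.mk (orbitRel (G α) (X α)) (π h x)) <| by
    rintro a b hab
    obtain ⟨g, rfl⟩ : ∃ g : G β, g • b = a := hab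
    exact Quotient.sound ⟨ν h g, (hequiv h g b).symm⟩

/-!
The natural map sends the orbit of a thread `(x_α)` to the thread of orbits `(G_α x_α)`; it is a
continuous map from a compact space to a Hausdorff one, so it suffices to show it is bijective.
Surjectivity is the nonemptiness of an inverse limit of nonempty compact Hausdorff spaces, applied
to the system of orbits `G_α x_α` picked out by a thread of orbits. For injectivity, freeness at the
least element `λ` propagates to every `G_α` through the injective equivariant bonding maps, so the
element of `G_α` carrying `y_α` to `x_α` is unique, and these unique elements form a thread.
-/

theorem properSMul_of_compactSpace {G X : Type*} [Group G] [TopologicalSpace G]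
    [TopologicalSpace X] [MulAction G X] [ContinuousSMul G X] [CompactSpace G] [T2Space X] :
    ProperSMul G X :=
  properSMul_iff_continuousSMul_ultrafilter_tendsto_t2.2 ⟨inferInstance, fun 𝒰 _ _ _ => by
    obtain ⟨g, -, hg⟩ := isCompact_univ.ultrafilter_le_nhds (𝒰.map Prod.fst) (by simp)
    exact ⟨g, hg⟩⟩

theorem eq_one_of_smul_eq_self_of_injective_equivariant {G H X Y : Type*} [Group G] [Group H]
    [MulAction G X] [MulAction H Y] (φ : G →* H) (f : X → Y)
    (hf : ∀ (g : G) (x : X), f (g • x) = φ g • f x) (hφ : Function.Injective φ)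
    (hfree : ∀ (h : H) (y : Y), h • y = y → h = 1) {g : G} {x : X} (hgx : g • x = x) :
    g = 1 :=
  hφ <| by rw [map_one]; exact hfree _ (f x) (by rw [← hf, hgx])

theorem eq_of_smul_eq_smul_of_free {G X : Type*} [Group G] [MulAction G X]
    (hfree : ∀ (g : G) (x : X), g • x = x → g = 1) {g g' : G} {x : X} (h : g • x = g' • x) :
    g = g' :=
  inv_mul_eq_one.mp <| hfree _ x <| by rw [mul_smul, ← h, inv_smul_smul]

namespace InvLimit

variable {Λ : Type*} [Preorder Λ] {X : Λ → Type*} {π : ∀ {α β : Λ}, α ≤ β → X β → X α}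

variable (π) in
def threadsBelow (α : Λ) : Set (∀ γ, X γ) :=
  {x | ∀ ⦃β : Λ⦄ (h : β ≤ α), x β = π h (x α)}

theorem threadsBelow_nonempty [∀ α, Nonempty (X α)]
    (hπcomp : ∀ {α β γ : Λ} (h₁ : α ≤ β) (h₂ : β ≤ γ) (x : X γ),
      π h₁ (π h₂ x) = π (h₁.trans h₂) x)
    (α : Λ) : (threadsBelow π α).Nonempty := by
  classical
  obtain ⟨x₀⟩ := ‹∀ α, Nonempty (X α)› α
  refine ⟨fun γ => if h : γ ≤ α then π h x₀ else Classical.arbitrary _, fun β h => ?_⟩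
  simp only [dif_pos h, dif_pos le_rfl, hπcomp]

theorem threadsBelow_antitone
    (hπcomp : ∀ {α β γ : Λ} (h₁ : α ≤ β) (h₂ : β ≤ γ) (x : X γ),
      π h₁ (π h₂ x) = π (h₁.trans h₂) x) :
    Antitone (threadsBelow (X := X) π) := by
  intro β α hβα x hx γ hγβ
  simp only [threadsBelow, Set.mem_ofPred_eq] at hx ⊢
  rw [hx (hγβ.trans hβα), hx hβα, hπcomp]

variable [∀ α, TopologicalSpace (X α)] [∀ α, T2Space (X α)]

theorem isClosed_threadsBelow (hπ : ∀ {α β : Λ} (h : α ≤ β), Continuous (π h)) (α : Λ) :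
    IsClosed (threadsBelow π α) := by
  simp only [threadsBelow, Set.ofPred_forall]
  exact isClosed_iInter fun β => isClosed_iInter fun h =>
    isClosed_eq (continuous_apply β) ((hπ h).comp (continuous_apply α))

theorem isClosed_threads (hπ : ∀ {α β : Λ} (h : α ≤ β), Continuous (π h)) :
    IsClosed {x : ∀ α, X α | ∀ ⦃α β : Λ⦄ (h : α ≤ β), π h (x β) = x α} := by
  simp only [Set.ofPred_forall]
  exact isClosed_iInter fun α => isClosed_iInter fun β => isClosed_iInter fun h =>
    isClosed_eq ((hπ h).comp (continuous_apply β)) (continuous_apply α)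

theorem compactSpace [∀ α, CompactSpace (X α)] (hπ : ∀ {α β : Λ} (h : α ≤ β), Continuous (π h)) :
    CompactSpace (InvLimit X π) :=
  isCompact_iff_compactSpace.mp (isClosed_threads hπ).isCompact

theorem nonempty [IsDirected Λ (· ≤ ·)] [∀ α, CompactSpace (X α)] [∀ α, Nonempty (X α)]
    (hπ : ∀ {α β : Λ} (h : α ≤ β), Continuous (π h))
    (hπcomp : ∀ {α β γ : Λ} (h₁ : α ≤ β) (h₂ : β ≤ γ) (x : X γ),
      π h₁ (π h₂ x) = π (h₁.trans h₂) x) :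
    Nonempty (InvLimit X π) := by
  rcases isEmpty_or_nonempty Λ with hΛ | hΛ
  · exact ⟨⟨isEmptyElim, fun α => isEmptyElim α⟩⟩
  obtain ⟨x, hx⟩ := IsCompact.nonempty_iInter_of_directed_nonempty_isCompact_isClosed
    (threadsBelow π) (threadsBelow_antitone hπcomp).directed_ge (threadsBelow_nonempty hπcomp)
    (fun α => (isClosed_threadsBelow hπ α).isCompact) (isClosed_threadsBelow hπ)
  rw [Set.mem_iInter] at hx
  exact ⟨⟨x, fun α β h => (hx β h).symm⟩⟩

end InvLimit

section OrbitSpaces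

variable {Λ : Type*} [Preorder Λ] {X : Λ → Type*} [∀ α, TopologicalSpace (X α)]
  {G : Λ → Type*} [∀ α, Group (G α)] [∀ α, MulAction (G α) (X α)]
  {π : ∀ {α β : Λ}, α ≤ β → X β → X α} {ν : ∀ {α β : Λ}, α ≤ β → G β →* G α}
  (hequiv : ∀ {α β : Λ} (h : α ≤ β) (g : G β) (x : X β), π h (g • x) = ν h g • π h x)

def orbitLimitMap : Quotient (limOrbitSetoid X G π ν) →
    InvLimit (fun α => Quotient (orbitRel (G α) (X α))) (quotBonding X G π ν hequiv) :=
  Quotient.lift (fun x => ⟨fun α => Quotient.mk _ (x.1 α), fun _ _ h => congrArg _ (x.2 h)⟩)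
    fun _ _ ⟨_, hg⟩ => Subtype.ext <| funext fun α => Quotient.sound ⟨_, hg α⟩

theorem continuous_orbitLimitMap : Continuous (orbitLimitMap hequiv) :=
  continuous_quot_lift _ <| .subtype_mk (continuous_pi fun α =>
    continuous_quot_mk.comp ((continuous_apply α).comp continuous_subtype_val)) _

theorem orbitLimitMap_injective {lam : Λ} (hlam : ∀ α, lam ≤ α)
    (hfree : ∀ (g : G lam) (x : X lam), g • x = x → g = 1)
    (hinj : ∀ α, Function.Injective (ν (hlam α))) :
    Function.Injective (orbitLimitMap hequiv) := by
  have hfreeAt (α : Λ) : ∀ (g : G α) (x : X α), g • x = x → g = 1 := fun _ _ =>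
    eq_one_of_smul_eq_self_of_injective_equivariant _ _ (hequiv (hlam α)) (hinj α) hfree
  intro a b
  induction a, b using Quotient.inductionOn₂ with | h x y => ?_
  intro hxy
  have hconj (α : Λ) : ∃ g : G α, g • y.1 α = x.1 α :=
    Quotient.exact (congrArg (fun q => q.1 α) hxy)
  choose g hg using hconj
  refine Quotient.sound
    ⟨⟨g, fun α β h => eq_of_smul_eq_smul_of_free (hfreeAt α) (x := y.1 α) ?_⟩, hg⟩
  have hx : π h (x.1 β) = x.1 α := x.2 h
  have hy : π h (y.1 β) = y.1 α := y.2 h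
  rw [hg α, ← hy, ← hequiv, hg β, hx]

theorem orbitLimitMap_surjective [IsDirected Λ (· ≤ ·)] [∀ α, CompactSpace (X α)]
    [∀ α, T2Space (X α)] [∀ α, T1Space (Quotient (orbitRel (G α) (X α)))]
    (hπ : ∀ {α β : Λ} (h : α ≤ β), Continuous (π h))
    (hπcomp : ∀ {α β γ : Λ} (h₁ : α ≤ β) (h₂ : β ≤ γ) (x : X γ),
      π h₁ (π h₂ x) = π (h₁.trans h₂) x) :
    Function.Surjective (orbitLimitMap hequiv) := by
  intro q
  let Y (α : Λ) := {z : X α // Quotient.mk _ z = q.1 α}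
  have (α : Λ) : CompactSpace (Y α) := isCompact_iff_compactSpace.mp
    (isClosed_singleton.preimage continuous_quotient_mk').isCompact
  have (α : Λ) : Nonempty (Y α) := ⟨⟨(q.1 α).out, Quotient.out_eq _⟩⟩
  -- `π h` maps the fibre over `q β` into the fibre over `q α` because `q` is a thread
  let πY {α β : Λ} (h : α ≤ β) (z : Y β) : Y α :=
    ⟨π h z.1, (congrArg (quotBonding X G π ν hequiv h) z.2).trans (q.2 h)⟩
  obtain ⟨y⟩ := InvLimit.nonempty (π := πY)
    (fun h => ((hπ h).comp continuous_subtype_val).subtype_mk _)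
    fun h₁ h₂ z => Subtype.ext (hπcomp h₁ h₂ z.1)
  exact ⟨Quotient.mk _ ⟨fun α => (y.1 α).1, fun α β h => congrArg Subtype.val (y.2 h)⟩,
    Subtype.ext <| funext fun α => (y.1 α).2⟩

end OrbitSpaces

theorem orbit_space_of_limit_homeomorphic_limit_of_orbit_spaces_general
    {Λ : Type*} [Preorder Λ] [IsDirected Λ (· ≤ ·)]
    (X : Λ → Type*) [∀ α, TopologicalSpace (X α)]
    [∀ α, CompactSpace (X α)] [∀ α, T2Space (X α)]
    (G : Λ → Type*) [∀ α, Group (G α)] [∀ α, TopologicalSpace (G α)]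
    [∀ α, CompactSpace (G α)]
    [∀ α, MulAction (G α) (X α)] [∀ α, ContinuousSMul (G α) (X α)]
    (π : ∀ {α β : Λ}, α ≤ β → X β → X α)
    (hπcont : ∀ {α β : Λ} (h : α ≤ β), Continuous (π h))
    (hπcomp : ∀ {α β γ : Λ} (h₁ : α ≤ β) (h₂ : β ≤ γ) (x : X γ),
      π h₁ (π h₂ x) = π (h₁.trans h₂) x)
    (ν : ∀ {α β : Λ}, α ≤ β → G β →* G α)
    (hequiv : ∀ {α β : Λ} (h : α ≤ β) (g : G β) (x : X β),
      π h (g • x) = ν h g • π h x)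
    (lam : Λ) (hlam : ∀ α, lam ≤ α)
    (hfree : ∀ (g : G lam) (x : X lam), g • x = x → g = 1)
    (hinj : ∀ α, Function.Injective (ν (hlam α))) :
    ∃ ψ : Quotient (limOrbitSetoid X G π ν) ≃ₜ
        {q : ∀ α, Quotient (MulAction.orbitRel (G α) (X α)) //
          ∀ ⦃α β : Λ⦄ (h : α ≤ β), quotBonding X G π ν hequiv h (q β) = q α},
      ∀ (x : InvLimit X π) (α : Λ),
        (ψ (Quotient.mk (limOrbitSetoid X G π ν) x)).1 α =
          Quotient.mk (MulAction.orbitRel (G α) (X α)) (x.1 α) := by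
  have (α : Λ) : ProperSMul (G α) (X α) := properSMul_of_compactSpace
  have := InvLimit.compactSpace hπcont
  let e := Equiv.ofBijective (orbitLimitMap hequiv)
    ⟨orbitLimitMap_injective hequiv hlam hfree hinj,
      orbitLimitMap_surjective hequiv hπcont hπcomp⟩
  exact ⟨(continuous_orbitLimitMap hequiv).homeoOfEquivCompactToT2 (f := e), fun _ _ => rfl⟩

/-- If `Λ` has a least element `λ₀`, the `G_λ₀`-action on `X_λ₀` is free and
each bonding homomorphism into `G_λ₀` is injective, then the natural map
`(lim X_α)/(lim G_α) → lim (X_α/G_α)` is a homeomorphism. -/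
theorem orbit_space_of_limit_homeomorphic_limit_of_orbit_spaces
    {Λ : Type*} [Preorder Λ] [IsDirected Λ (· ≤ ·)]
    (X : Λ → Type*) [∀ α, TopologicalSpace (X α)]
    [∀ α, CompactSpace (X α)] [∀ α, T2Space (X α)] [∀ α, Nonempty (X α)]
    (G : Λ → Type*) [∀ α, Group (G α)] [∀ α, TopologicalSpace (G α)]
    [∀ α, IsTopologicalGroup (G α)] [∀ α, CompactSpace (G α)]
    [∀ α, MulAction (G α) (X α)] [∀ α, ContinuousSMul (G α) (X α)]
    (π : ∀ {α β : Λ}, α ≤ β → X β → X α)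
    (hπcont : ∀ {α β : Λ} (h : α ≤ β), Continuous (π h))
    (hπid : ∀ (α : Λ) (x : X α), π (le_refl α) x = x)
    (hπcomp : ∀ {α β γ : Λ} (h₁ : α ≤ β) (h₂ : β ≤ γ) (x : X γ),
      π h₁ (π h₂ x) = π (h₁.trans h₂) x)
    (ν : ∀ {α β : Λ}, α ≤ β → G β →* G α)
    (hνcont : ∀ {α β : Λ} (h : α ≤ β), Continuous (ν h))
    (hνid : ∀ (α : Λ) (g : G α), ν (le_refl α) g = g)
    (hνcomp : ∀ {α β γ : Λ} (h₁ : α ≤ β) (h₂ : β ≤ γ) (g : G γ),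
      ν h₁ (ν h₂ g) = ν (h₁.trans h₂) g)
    (hequiv : ∀ {α β : Λ} (h : α ≤ β) (g : G β) (x : X β),
      π h (g • x) = ν h g • π h x)
    (lam : Λ) (hlam : ∀ α, lam ≤ α)
    (hfree : ∀ (g : G lam) (x : X lam), g • x = x → g = 1)
    (hinj : ∀ α, Function.Injective (ν (hlam α))) :
    ∃ ψ : Quotient (limOrbitSetoid X G π ν) ≃ₜ
        {q : ∀ α, Quotient (MulAction.orbitRel (G α) (X α)) //
          ∀ ⦃α β : Λ⦄ (h : α ≤ β), quotBonding X G π ν hequiv h (q β) = q α},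
      ∀ (x : InvLimit X π) (α : Λ),
        (ψ (Quotient.mk (limOrbitSetoid X G π ν) x)).1 α =
          Quotient.mk (MulAction.orbitRel (G α) (X α)) (x.1 α) :=
  orbit_space_of_limit_homeomorphic_limit_of_orbit_spaces_general X G π hπcont hπcomp ν hequiv lam
    hlam hfree hinj
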